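/- arXiv:2205.05135 — 3 statements merged into one kernel-verified Lean document; each statement's English description precedes it below -/
import Mathlib

section
/- In any ring R with unit, for all P, K ∈ R and every n ∈ ℕ one has K^{n+2} − Σ_{ℓ=0}^{n} K^{n+1−ℓ}·Ω⁽ℓ⁾ = K·Wₙ, where Ω⁽ℓ⁾ := P·K·((1−P)·K)^{ℓ} and Wₙ := ((1−P)·K)^{n+1}. That is, the residual obtained by subtracting from the (n+2)-step evolution the contributions of the first n+1 Mori–Zwanzig operators equals the one-step evolution of the n-th orthogonal dynamics; this identity underlies the recursive extraction of memory operators from snapshot data (Algorithm 1). -/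
/-- The residual obtained by subtracting from the `(n+2)`-step evolution the contributions
of the first `n+1` Mori–Zwanzig operators `Ω⁽ℓ⁾ = P*K*((1-P)*K)^ℓ` equals the one-step
evolution of the `n`-th orthogonal dynamics `Wₙ = ((1-P)*K)^(n+1)`. -/
theorem mz_residual_eq_evolved_orthogonal_dynamics {R : Type*} [Ring R] (P K : R) (n : ℕ) :
    K ^ (n + 2) -
      ∑ ℓ ∈ Finset.range (n + 1), K ^ (n + 1 - ℓ) * (P * K * ((1 - P) * K) ^ ℓ) =
    K * ((1 - P) * K) ^ (n + 1) := by
  induction n with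
  | zero => simp; noncomm_ring
  | succ n ih =>
    have hsum : ∑ ℓ ∈ Finset.range (n + 1), K ^ (n + 2 - ℓ) * (P * K * ((1 - P) * K) ^ ℓ)
        = K * ∑ ℓ ∈ Finset.range (n + 1), K ^ (n + 1 - ℓ) * (P * K * ((1 - P) * K) ^ ℓ) := by
      rw [Finset.mul_sum]
      refine Finset.sum_congr rfl fun ℓ hℓ => ?_
      have h : n + 2 - ℓ = (n + 1 - ℓ) + 1 := by
        have := Finset.mem_range.mp hℓ; omega
      rw [h, pow_succ', mul_assoc]
    have key : K ^ (n + 2)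
        = K * ((1 - P) * K) ^ (n + 1)
          + ∑ ℓ ∈ Finset.range (n + 1), K ^ (n + 1 - ℓ) * (P * K * ((1 - P) * K) ^ ℓ) := by
      exact eq_add_of_sub_eq ih
    have hK : K ^ (n + 1 + 2) = K * K ^ (n + 2) := by
      rw [show n + 1 + 2 = (n + 2) + 1 from rfl, pow_succ']
    have hW : ((1 - P) * K) ^ (n + 1 + 1) = ((1 - P) * K) * ((1 - P) * K) ^ (n + 1) := by
      rw [pow_succ']
    have h2 : n + 2 - (n + 1) = 1 := by omega
    rw [Finset.sum_range_succ, hsum, h2, hK, key, hW]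
    noncomm_ring
end

section
/- Let C : ℕ → (M×M real matrices) with C(0) invertible, and let κ⁽⁰⁾, κ⁽¹⁾, … be M×M real matrices satisfying C(n+1) = Σ_{ℓ=0}^{n} κ⁽ℓ⁾·C(n−ℓ) for every n ∈ ℕ. For any v ∈ ℝᴹ define the full-memory, zero-noise generalized Langevin prediction ĝ₀ := v and ĝₙ₊₁ := Σ_{ℓ=0}^{n} κ⁽ℓ⁾·ĝₙ₋ₗ. Then ĝₙ = C(n)·C(0)⁻¹·v for all n ∈ ℕ. That is, prediction by the linear (Mori) regression-based Mori–Zwanzig model with full memory and neglected orthogonal dynamics is functionally identical to propagation by the two-time correlation matrices. -/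
open Matrix

/-- Prediction by the linear (Mori) regression-based Mori–Zwanzig model with full memory
and neglected orthogonal dynamics is identical to propagation by the two-time correlation
matrices: if `C(n+1) = ∑_{ℓ=0}^{n} κ⁽ℓ⁾ C(n−ℓ)` for all `n`, and `ĝ₀ = v`,
`ĝₙ₊₁ = ∑_{ℓ=0}^{n} κ⁽ℓ⁾ ĝₙ₋ₗ`, then `ĝₙ = C(n) C(0)⁻¹ v` for all `n`. -/
theorem mz_full_memory_prediction_eq_correlation_propagation {M : ℕ}
    (C : ℕ → Matrix (Fin M) (Fin M) ℝ) (hC0 : IsUnit (C 0))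
    (κ : ℕ → Matrix (Fin M) (Fin M) ℝ)
    (hrec : ∀ n, C (n + 1) = ∑ ℓ ∈ Finset.range (n + 1), κ ℓ * C (n - ℓ))
    (v : Fin M → ℝ) (g : ℕ → Fin M → ℝ)
    (hg0 : g 0 = v)
    (hg : ∀ n, g (n + 1) = ∑ ℓ ∈ Finset.range (n + 1), (κ ℓ).mulVec (g (n - ℓ))) :
    ∀ n, g n = (C n * (C 0)⁻¹).mulVec v := by
  intro n
  induction n using Nat.strong_induction_on with
  | _ n ih =>
    cases n with
    | zero =>
      simp [hg0, Matrix.mul_nonsing_inv _ ((Matrix.isUnit_iff_isUnit_det _).mp hC0)]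
    | succ n =>
      rw [hg n]
      have : ∀ ℓ ∈ Finset.range (n + 1),
          (κ ℓ).mulVec (g (n - ℓ)) = (κ ℓ * (C (n - ℓ) * (C 0)⁻¹)).mulVec v := by
        intro ℓ hℓ
        rw [ih (n - ℓ) (Nat.lt_succ_of_le (Nat.sub_le n ℓ)), Matrix.mulVec_mulVec]
      rw [Finset.sum_congr rfl this, hrec n, Finset.sum_mul]
      simp only [Matrix.mul_assoc]
      ext i
      simp only [Matrix.mulVec, dotProduct, Finset.sum_apply, Matrix.sum_apply,
        Finset.sum_mul, Pi.smul_apply, smul_eq_mul]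
      exact Finset.sum_comm
end

section
/- Let C : ℕ → (M×M real matrices) with C(0) invertible, and let κ⁽⁰⁾, κ⁽¹⁾, … be M×M real matrices satisfying C(n+1) = Σ_{ℓ=0}^{n} κ⁽ℓ⁾·C(n−ℓ) for every n ∈ ℕ. Suppose moreover that C(n) → 0 (entrywise) as n → ∞. Then for every initial vector v ∈ ℝᴹ, the full-memory zero-noise generalized Langevin prediction ĝₙ (defined by ĝ₀ = v, ĝₙ₊₁ = Σ_{ℓ=0}^{n} κ⁽ℓ⁾ ĝₙ₋ₗ) converges to 0 as n → ∞. Hence when the two-time correlations of a chaotic system decay, linear-projection Mori–Zwanzig predictions relax to the mean. -/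
open Matrix

lemma sum_mulVec_aux {M : ℕ} {ι : Type*} [DecidableEq ι] (s : Finset ι)
    (A : ι → Matrix (Fin M) (Fin M) ℝ) (v : Fin M → ℝ) :
    (∑ i ∈ s, A i).mulVec v = ∑ i ∈ s, (A i).mulVec v := by
  induction s using Finset.induction_on with
  | empty => simp
  | insert _ _ h ih => simp [Finset.sum_insert h, Matrix.add_mulVec, ih]

/-- If the two-time correlation matrices decay, `C(n) → 0`, then the full-memory
zero-noise generalized Langevin prediction `ĝₙ` (with `ĝ₀ = v`,
`ĝₙ₊₁ = ∑_{ℓ=0}^{n} κ⁽ℓ⁾ ĝₙ₋ₗ`, where `C(n+1) = ∑_{ℓ=0}^{n} κ⁽ℓ⁾ C(n−ℓ)`)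
converges to `0`: linear-projection Mori–Zwanzig predictions relax to the mean. -/
theorem mz_linear_prediction_relaxes_to_mean {M : ℕ}
    (C : ℕ → Matrix (Fin M) (Fin M) ℝ) (hC0 : IsUnit (C 0))
    (κ : ℕ → Matrix (Fin M) (Fin M) ℝ)
    (hrec : ∀ n, C (n + 1) = ∑ ℓ ∈ Finset.range (n + 1), κ ℓ * C (n - ℓ))
    (hdecay : Filter.Tendsto C Filter.atTop (nhds 0))
    (v : Fin M → ℝ) (g : ℕ → Fin M → ℝ)
    (hg0 : g 0 = v)
    (hg : ∀ n, g (n + 1) = ∑ ℓ ∈ Finset.range (n + 1), (κ ℓ).mulVec (g (n - ℓ))) :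
    Filter.Tendsto g Filter.atTop (nhds 0) := by
  have hdet : IsUnit (C 0).det := (Matrix.isUnit_iff_isUnit_det _).mp hC0
  have key : ∀ n, g n = (C n * (C 0)⁻¹).mulVec v := by
    intro n
    induction n using Nat.strong_induction_on with
    | _ n ih =>
      match n with
      | 0 => simp [hg0, Matrix.mul_nonsing_inv _ hdet]
      | Nat.succ n =>
        rw [hg, hrec, Matrix.sum_mul, sum_mulVec_aux]
        refine Finset.sum_congr rfl fun ℓ hℓ => ?_
        simp [ih (n - ℓ) (by omega), Matrix.mulVec_mulVec, Matrix.mul_assoc]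
  have hcont : Continuous fun A : Matrix (Fin M) (Fin M) ℝ => (A * (C 0)⁻¹).mulVec v :=
    (continuous_id.matrix_mul continuous_const).matrix_mulVec continuous_const
  have := (hcont.tendsto 0).comp hdecay
  simp only [Function.comp_def, Matrix.zero_mul, Matrix.zero_mulVec] at this
  have hfun : g = fun n => (C n * (C 0)⁻¹).mulVec v := funext key
  rw [hfun]
  exact this
end
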